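/- arXiv:0901.3671 — 2 statements merged into one kernel-verified Lean document; each statement's English description precedes it below -/
import Mathlib

section
/- Let Φ be an irreducible reduced root system with basis Δ, and write r for the maximal squared root length (minimal squared length normalized to 1). A root γ = Σ_{α∈Δ} n_α α is long if and only if r divides n_α for every short simple root α ∈ Δ_sh. -/
open scoped RealInnerProductSpace

variable {V : Type*} [NormedAddCommGroup V] [InnerProductSpace ℝ V]

/-- An irreducible reduced (crystallographic) root system in a real inner product space. -/
structure IsIrredRootSystem (Φ : Set V) : Prop where
  finite : Φ.Finite
  nonempty : Φ.Nonempty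
  nonzero : (0 : V) ∉ Φ
  spanning : Submodule.span ℝ Φ = ⊤
  reflect_mem : ∀ α ∈ Φ, ∀ β ∈ Φ, β - (2 * ⟪α, β⟫ / ⟪α, α⟫) • α ∈ Φ
  crystallographic : ∀ α ∈ Φ, ∀ β ∈ Φ, ∃ n : ℤ, 2 * ⟪α, β⟫ / ⟪α, α⟫ = (n : ℝ)
  reduced : ∀ α ∈ Φ, ∀ t : ℝ, t • α ∈ Φ → t = 1 ∨ t = -1
  irreducible : ∀ Φ₁ Φ₂ : Set V, Φ₁ ∪ Φ₂ = Φ →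
    (∀ α ∈ Φ₁, ∀ β ∈ Φ₂, ⟪α, β⟫ = 0) → Φ₁ = ∅ ∨ Φ₂ = ∅

/-- `Δ` is a base (system of simple roots) for `Φ`: it is contained in `Φ`, linearly
independent, and every root is an integral combination of `Δ` with coefficients all of
the same sign. -/
def IsBase (Φ : Set V) (Δ : Finset V) : Prop :=
  (Δ : Set V) ⊆ Φ ∧ LinearIndependent ℝ (fun a : Δ => (a : V)) ∧
    ∀ γ ∈ Φ, ∃ c : V → ℤ, γ = ∑ α ∈ Δ, (c α : ℝ) • α ∧
      ((∀ α ∈ Δ, 0 ≤ c α) ∨ (∀ α ∈ Δ, c α ≤ 0))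

/-- The positive roots with respect to the base `Δ`. -/
def posRoots (Φ : Set V) (Δ : Finset V) : Set V :=
  {γ ∈ Φ | ∃ c : V → ℕ, γ = ∑ α ∈ Δ, (c α : ℝ) • α}

/-- The coroot `γ^∨ = 2γ/(γ|γ)` of a root `γ`. -/
noncomputable def coroot (γ : V) : V := (2 / ⟪γ, γ⟫) • γ

/-- The set of reflections in the roots of `Φ`, as linear automorphisms of `V`. -/
def reflections (Φ : Set V) : Set (V ≃ₗ[ℝ] V) :=
  {w | ∃ α ∈ Φ, ∀ v, w v = v - (2 * ⟪α, v⟫ / ⟪α, α⟫) • α}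

/-- The Weyl group of `Φ`: the group generated by the reflections in the roots. -/
def weylGroup (Φ : Set V) : Subgroup (V ≃ₗ[ℝ] V) := Subgroup.closure (reflections Φ)

/-- The simple reflections with respect to the base `Δ`. -/
def simpleReflections (Δ : Finset V) : Set (V ≃ₗ[ℝ] V) :=
  {w | ∃ α ∈ Δ, ∀ v, w v = v - (2 * ⟪α, v⟫ / ⟪α, α⟫) • α}

/-- The length of `w` with respect to the simple reflections determined by `Δ`. -/
noncomputable def len (Δ : Finset V) (w : V ≃ₗ[ℝ] V) : ℕ :=
  sInf {n | ∃ L : List (V ≃ₗ[ℝ] V),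
    (∀ s ∈ L, s ∈ simpleReflections Δ) ∧ L.length = n ∧ L.prod = w}

/-- `t` is the highest root of `Φ` with respect to the base `Δ`. -/
def IsHighestRoot (Φ : Set V) (Δ : Finset V) (t : V) : Prop :=
  t ∈ Φ ∧ ∀ α ∈ Φ, ∃ c : V → ℕ, t - α = ∑ a ∈ Δ, (c a : ℝ) • a

section AuxRS

variable {Φ : Set V}

private lemma RS.inner_self_pos (hΦ : IsIrredRootSystem Φ) {α : V} (hα : α ∈ Φ) :
    0 < ⟪α, α⟫ := by
  have hne : α ≠ 0 := fun h => hΦ.nonzero (h ▸ hα)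
  exact lt_of_le_of_ne real_inner_self_nonneg (Ne.symm (inner_self_ne_zero.mpr hne))

private lemma RS.neg_mem (hΦ : IsIrredRootSystem Φ) {γ : V} (hγ : γ ∈ Φ) : -γ ∈ Φ := by
  have h := hΦ.reflect_mem γ hγ γ hγ
  have hne : ⟪γ, γ⟫ ≠ 0 := ne_of_gt (RS.inner_self_pos hΦ hγ)
  have h2 : 2 * ⟪γ, γ⟫ / ⟪γ, γ⟫ = (2 : ℝ) := by field_simp
  rw [h2] at h
  convert h using 1
  module

private lemma RS.reflect_norm {δ : V} (hδ : ⟪δ, δ⟫ ≠ 0) (v : V) :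
    ⟪v - (2 * ⟪δ, v⟫ / ⟪δ, δ⟫) • δ, v - (2 * ⟪δ, v⟫ / ⟪δ, δ⟫) • δ⟫ = ⟪v, v⟫ := by
  rw [real_inner_sub_sub_self, real_inner_smul_right, real_inner_smul_left,
    real_inner_smul_right, real_inner_comm v δ]
  field_simp
  ring

/-- Connectivity: for any roots `α β` there is a root of the same length as `α`
not orthogonal to `β`. -/
private lemma RS.connect (hΦ : IsIrredRootSystem Φ) {α β : V} (hα : α ∈ Φ) (hβ : β ∈ Φ) :
    ∃ γ ∈ Φ, ⟪γ, γ⟫ = ⟪α, α⟫ ∧ ⟪γ, β⟫ ≠ 0 := by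
  classical
  set step : V → V → Prop := fun x y => ∃ δ ∈ Φ, y = x - (2 * ⟪δ, x⟫ / ⟪δ, δ⟫) • δ with hstep
  set O : Set V := {g | Relation.ReflTransGen step α g} with hO
  have hOmem : ∀ g ∈ O, g ∈ Φ ∧ ⟪g, g⟫ = ⟪α, α⟫ := by
    intro g hg
    have hg' : Relation.ReflTransGen step α g := hg
    induction hg' with
    | refl => exact ⟨hα, rfl⟩
    | tail h1 h2 ih =>
      obtain ⟨δ, hδ, rfl⟩ := h2
      have ihh := ih h1
      refine ⟨hΦ.reflect_mem δ hδ _ ihh.1, ?_⟩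
      rw [RS.reflect_norm (ne_of_gt (RS.inner_self_pos hΦ hδ)) _]
      exact ihh.2
  set Φ₁ : Set V := {b | b ∈ Φ ∧ ∃ g ∈ O, ⟪g, b⟫ ≠ 0} with hΦ₁
  set Φ₂ : Set V := {b | b ∈ Φ ∧ ∀ g ∈ O, ⟪g, b⟫ = 0} with hΦ₂
  have hunion : Φ₁ ∪ Φ₂ = Φ := by
    ext b
    constructor
    · rintro (⟨hb, _⟩ | ⟨hb, _⟩) <;> exact hb
    · intro hb
      by_cases h : ∀ g ∈ O, ⟪g, b⟫ = 0
      · exact Or.inr ⟨hb, h⟩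
      · push_neg at h
        exact Or.inl ⟨hb, h⟩
  have horth : ∀ a ∈ Φ₁, ∀ b ∈ Φ₂, ⟪a, b⟫ = 0 := by
    intro a ha b hb
    by_contra hab
    obtain ⟨haΦ, g, hgO, hga⟩ := ha
    obtain ⟨hbΦ, hb2⟩ := hb
    have hgO' : (g - (2 * ⟪a, g⟫ / ⟪a, a⟫) • a) ∈ O :=
      Relation.ReflTransGen.tail hgO ⟨a, haΦ, rfl⟩
    have h0 := hb2 _ hgO'
    rw [inner_sub_left, real_inner_smul_left, hb2 g hgO] at h0
    have hc : 2 * ⟪a, g⟫ / ⟪a, a⟫ ≠ 0 := by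
      apply div_ne_zero
      · have hag : ⟪a, g⟫ ≠ 0 := by rw [real_inner_comm]; exact hga
        exact mul_ne_zero two_ne_zero hag
      · exact ne_of_gt (RS.inner_self_pos hΦ haΦ)
    have : ⟪a, b⟫ = 0 := by
      rcases mul_eq_zero.mp (by linarith : (2 * ⟪a, g⟫ / ⟪a, a⟫) * ⟪a, b⟫ = 0) with h | h
      · exact absurd h hc
      · exact h
    exact hab this
  rcases hΦ.irreducible Φ₁ Φ₂ hunion horth with h | h
  · exfalso
    have hmem : α ∈ Φ₁ :=
      ⟨hα, α, Relation.ReflTransGen.refl, ne_of_gt (RS.inner_self_pos hΦ hα)⟩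
    rw [h] at hmem
    exact hmem
  · have hb1 : β ∈ Φ₁ := by
      have hmem : β ∈ Φ₁ ∪ Φ₂ := by rw [hunion]; exact hβ
      rcases hmem with h' | h'
      · exact h'
      · rw [h] at h'; exact absurd h' (Set.notMem_empty β)
    obtain ⟨-, g, hgO, hgb⟩ := hb1
    exact ⟨g, (hOmem g hgO).1, (hOmem g hgO).2, hgb⟩

/-- Ratio lemma: if `β, δ` are non-orthogonal roots with `⟪δ,δ⟫ ≤ ⟪β,β⟫` then the
ratio of squared lengths is `1`, `2` or `3`. -/
private lemma RS.ratio (hΦ : IsIrredRootSystem Φ) {β δ : V} (hβ : β ∈ Φ) (hδ : δ ∈ Φ)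
    (hne : ⟪β, δ⟫ ≠ 0) (hle : ⟪δ, δ⟫ ≤ ⟪β, β⟫) :
    ∃ k : ℤ, 1 ≤ k ∧ k ≤ 3 ∧ ⟪β, β⟫ = (k : ℝ) * ⟪δ, δ⟫ := by
  have hδ0 : (0:ℝ) < ⟪δ, δ⟫ := RS.inner_self_pos hΦ hδ
  have hβ0 : (0:ℝ) < ⟪β, β⟫ := RS.inner_self_pos hΦ hβ
  by_cases heq : ⟪β, δ⟫ * ⟪β, δ⟫ = ⟪β, β⟫ * ⟪δ, δ⟫
  · -- equality in Cauchy-Schwarz: β is a multiple of δ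
    have hv : β - (⟪δ, β⟫ / ⟪δ, δ⟫) • δ = 0 := by
      rw [← inner_self_eq_zero (𝕜 := ℝ)]
      have hcomm : ⟪δ, β⟫ = ⟪β, δ⟫ := real_inner_comm β δ
      rw [real_inner_sub_sub_self, real_inner_smul_right, real_inner_smul_left,
        real_inner_smul_right]
      field_simp
      linear_combination -heq + (⟪δ, β⟫ - ⟪β, δ⟫) * hcomm
    have hβeq : β = (⟪δ, β⟫ / ⟪δ, δ⟫) • δ := by
      have := sub_eq_zero.mp hv
      exact this
    have hmem : (⟪δ, β⟫ / ⟪δ, δ⟫) • δ ∈ Φ := hβeq ▸ hβ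
    rcases hΦ.reduced δ hδ _ hmem with h1 | h1 <;>
    · refine ⟨1, le_refl _, by norm_num, ?_⟩
      rw [hβeq, real_inner_smul_left, real_inner_smul_right, h1]
      push_cast
      ring
  · have hlt : ⟪β, δ⟫ * ⟪β, δ⟫ < ⟪β, β⟫ * ⟪δ, δ⟫ :=
      lt_of_le_of_ne (real_inner_mul_inner_self_le β δ) heq
    obtain ⟨m, hm⟩ := hΦ.crystallographic δ hδ β hβ
    obtain ⟨m', hm'⟩ := hΦ.crystallographic β hβ δ hδ
    have hmr : (m : ℝ) * ⟪δ, δ⟫ = 2 * ⟪β, δ⟫ := by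
      rw [← hm]; rw [real_inner_comm δ β]; field_simp
    have hm'r : (m' : ℝ) * ⟪β, β⟫ = 2 * ⟪β, δ⟫ := by
      rw [← hm']; field_simp
    have hmne : (m : ℝ) ≠ 0 := by
      intro h
      rw [h] at hmr
      simp at hmr
      exact hne (by linarith)
    have hm'ne : (m' : ℝ) ≠ 0 := by
      intro h
      rw [h] at hm'r
      simp at hm'r
      exact hne (by linarith)
    have hprod : (m : ℝ) * (m' : ℝ) * (⟪δ, δ⟫ * ⟪β, β⟫) = 4 * (⟪β, δ⟫ * ⟪β, δ⟫) := by
      linear_combination ((m' : ℝ) * ⟪β, β⟫) * hmr + (2 * ⟪β, δ⟫) * hm'r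
    have hdb : (0:ℝ) < ⟪δ, δ⟫ * ⟪β, β⟫ := mul_pos hδ0 hβ0
    have hsqpos : (0:ℝ) < ⟪β, δ⟫ * ⟪β, δ⟫ := mul_self_pos.mpr hne
    have hppos : (0:ℝ) < (m : ℝ) * (m' : ℝ) := by
      have h5 : (0:ℝ) * (⟪δ, δ⟫ * ⟪β, β⟫) < (m : ℝ) * (m' : ℝ) * (⟪δ, δ⟫ * ⟪β, β⟫) := by
        rw [hprod, zero_mul]
        linarith
      exact lt_of_mul_lt_mul_right h5 (le_of_lt hdb)
    have hplt : (m : ℝ) * (m' : ℝ) < 4 := by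
      have h5 : (m : ℝ) * (m' : ℝ) * (⟪δ, δ⟫ * ⟪β, β⟫) < 4 * (⟪δ, δ⟫ * ⟪β, β⟫) := by
        rw [hprod]
        nlinarith [hlt]
      exact lt_of_mul_lt_mul_right h5 (le_of_lt hdb)
    have hk1 : (1 : ℤ) ≤ m * m' := by
      have : (0:ℝ) < ((m * m' : ℤ) : ℝ) := by push_cast; exact hppos
      exact_mod_cast this
    have hk3 : m * m' ≤ 3 := by
      have h4 : ((m * m' : ℤ) : ℝ) < 4 := by push_cast; exact hplt
      have : m * m' < 4 := by exact_mod_cast h4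
      omega
    -- |m'| ≤ |m|
    have habsr : |(m' : ℝ)| * ⟪β, β⟫ = |(m : ℝ)| * ⟪δ, δ⟫ := by
      rw [← abs_of_pos hβ0, ← abs_of_pos hδ0, ← abs_mul, ← abs_mul, hmr, hm'r]
    have hmle : |m'| ≤ |m| := by
      have hr : |(m' : ℝ)| ≤ |(m : ℝ)| := by
        nlinarith [abs_nonneg (m : ℝ), abs_nonneg (m' : ℝ)]
      have : |(m' : ℤ)| ≤ |(m : ℤ)| := by exact_mod_cast hr
      exact this
    have hm'ne' : m' ≠ 0 := by
      intro h; rw [h] at hm'ne; exact hm'ne (by norm_num)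
    have hsq : m' * m' ≤ 3 := by
      have e1 : |m'| * |m| = |m * m'| := by rw [abs_mul]; ring
      have e2 : |m * m'| = m * m' := abs_of_pos (by omega)
      nlinarith [mul_le_mul_of_nonneg_left hmle (abs_nonneg m'), abs_mul_abs_self m']
    have habs1 : |m'| = 1 := by
      have h1 : 1 ≤ |m'| := Int.one_le_abs (by omega)
      nlinarith [abs_mul_abs_self m']
    have hm'sq : m' * m' = 1 := by
      rw [← abs_mul_abs_self, habs1]; ring
    refine ⟨m * m', hk1, hk3, ?_⟩
    have : (m' : ℝ) * ((m' : ℝ) * ⟪β, β⟫) = (m' : ℝ) * ((m : ℝ) * ⟪δ, δ⟫) := by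
      rw [hm'r, hmr]
    have hsq' : (m' : ℝ) * (m' : ℝ) = 1 := by exact_mod_cast hm'sq
    push_cast
    nlinarith [this, hsq']

/-- Every root has squared length `1` or `r`. -/
private lemma RS.two_lengths (hΦ : IsIrredRootSystem Φ)
    (hnorm : IsLeast {x : ℝ | ∃ α ∈ Φ, x = ⟪α, α⟫} 1)
    (r : ℕ) (hr : IsGreatest {x : ℝ | ∃ α ∈ Φ, x = ⟪α, α⟫} (r : ℝ)) :
    ∀ β ∈ Φ, ⟪β, β⟫ = 1 ∨ ⟪β, β⟫ = (r : ℝ) := by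
  obtain ⟨θ, hθ, hθr⟩ := hr.1
  obtain ⟨σ, hσ, hσ1⟩ := hnorm.1
  have hub : ∀ β ∈ Φ, ⟪β, β⟫ ≤ (r : ℝ) := fun β hβ => hr.2 ⟨β, hβ, rfl⟩
  have hlb : ∀ β ∈ Φ, (1:ℝ) ≤ ⟪β, β⟫ := fun β hβ => hnorm.2 ⟨β, hβ, rfl⟩
  have claim1 : ∀ β ∈ Φ, ∃ k : ℤ, 1 ≤ k ∧ k ≤ 3 ∧ (r : ℝ) = (k : ℝ) * ⟪β, β⟫ := by
    intro β hβ
    obtain ⟨g, hg, hgθ, hgβ⟩ := RS.connect hΦ hθ hβ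
    have hgr : ⟪g, g⟫ = (r : ℝ) := by rw [hgθ, ← hθr]
    obtain ⟨k, h1, h3, hk⟩ := RS.ratio hΦ hg hβ hgβ (by rw [hgr]; exact hub β hβ)
    exact ⟨k, h1, h3, by rw [← hgr]; exact hk⟩
  have claim2 : ∀ β ∈ Φ, ∃ k : ℤ, 1 ≤ k ∧ k ≤ 3 ∧ ⟪β, β⟫ = (k : ℝ) := by
    intro β hβ
    obtain ⟨g, hg, hgσ, hgβ⟩ := RS.connect hΦ hσ hβ
    have hg1 : ⟪g, g⟫ = (1 : ℝ) := by rw [hgσ, ← hσ1]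
    have hβg : ⟪β, g⟫ ≠ 0 := by rw [real_inner_comm]; exact hgβ
    obtain ⟨k, h1, h3, hk⟩ := RS.ratio hΦ hβ hg hβg (by rw [hg1]; exact hlb β hβ)
    exact ⟨k, h1, h3, by rw [hk, hg1, mul_one]⟩
  have hr3 : (r : ℤ) ≤ 3 := by
    obtain ⟨k, h1, h3, hk⟩ := claim1 σ hσ
    have : (r : ℝ) = (k : ℝ) := by rw [hk, ← hσ1, mul_one]
    have : (r : ℤ) = k := by exact_mod_cast this
    omega
  intro β hβ
  obtain ⟨k₁, h11, h13, hk1⟩ := claim1 β hβ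
  obtain ⟨k₂, h21, h23, hk2⟩ := claim2 β hβ
  have hrk : (r : ℤ) = k₁ * k₂ := by
    have : (r : ℝ) = (k₁ : ℝ) * (k₂ : ℝ) := by rw [hk1, hk2]
    exact_mod_cast this
  by_cases hc : k₁ = 1
  · right
    rw [hk1, hc]
    push_cast
    ring
  · left
    have hk21 : k₂ = 1 := by
      have h2 : 2 ≤ k₁ := by omega
      nlinarith
    rw [hk2, hk21]
    norm_num

private lemma RS.coeff_unique {Δ : Finset V}
    (hli : LinearIndependent ℝ (fun a : Δ => (a : V)))
    (c d : V → ℤ)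
    (h : ∑ α ∈ Δ, (c α : ℝ) • α = ∑ α ∈ Δ, (d α : ℝ) • α) :
    ∀ α ∈ Δ, c α = d α := by
  intro α hα
  have h0 : ∑ a ∈ (Finset.univ : Finset {x // x ∈ Δ}),
      (((c (a : V) : ℝ) - (d (a : V) : ℝ)) • (a : V)) = 0 := by
    rw [Finset.univ_eq_attach,
      Finset.sum_attach Δ (fun x => ((c x : ℝ) - (d x : ℝ)) • x)]
    simp only [sub_smul]
    rw [Finset.sum_sub_distrib, h, sub_self]
  have hz := linearIndependent_iff'.mp hli (Finset.univ : Finset {x // x ∈ Δ})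
    (fun a : {x // x ∈ Δ} => (c (a : V) : ℝ) - (d (a : V) : ℝ)) h0 ⟨α, hα⟩ (Finset.mem_univ _)
  have : (c α : ℝ) = (d α : ℝ) := by
    have := sub_eq_zero.mp hz
    exact this
  exact_mod_cast this

/-- The pairing integer of a long root against a short root is divisible by `r`. -/
private lemma RS.r_dvd_pair (hΦ : IsIrredRootSystem Φ) {r : ℕ} {α γ : V}
    (hα : α ∈ Φ) (hγ : γ ∈ Φ) (hαs : ⟪α, α⟫ = 1) (hγl : ⟪γ, γ⟫ = (r : ℝ))
    {m : ℤ} (hm : 2 * ⟪α, γ⟫ / ⟪α, α⟫ = (m : ℝ)) :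
    (r : ℤ) ∣ m := by
  obtain ⟨m', hm'⟩ := hΦ.crystallographic γ hγ α hα
  refine ⟨m', ?_⟩
  have hrpos : (0:ℝ) < (r : ℝ) := by rw [← hγl]; exact RS.inner_self_pos hΦ hγ
  have hrne : (r : ℝ) ≠ 0 := ne_of_gt hrpos
  rw [hγl] at hm'
  rw [hαs] at hm
  have h1 : 2 * ⟪γ, α⟫ = (m' : ℝ) * (r : ℝ) := by
    field_simp at hm'
    linarith
  have h2 : (m : ℝ) = 2 * ⟪α, γ⟫ := by rw [← hm]; field_simp
  have : (m : ℝ) = ((r : ℝ)) * (m' : ℝ) := by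
    rw [h2, real_inner_comm γ α]
    linarith
  exact_mod_cast this

end AuxRS

section AuxRS2

variable {Φ : Set V}

/-- Descent: every long positive root has all its short-simple coefficients divisible
by `r`. -/
private lemma RS.forward (hΦ : IsIrredRootSystem Φ) {Δ : Finset V} (hΔ : IsBase Φ Δ)
    (r : ℕ) (hr1 : (1:ℝ) ≤ (r : ℝ))
    (hlen : ∀ β ∈ Φ, ⟪β, β⟫ = 1 ∨ ⟪β, β⟫ = (r : ℝ)) :
    ∀ N : ℕ, ∀ γ ∈ Φ, ⟪γ, γ⟫ = (r : ℝ) → ∀ c : V → ℤ,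
      γ = ∑ α ∈ Δ, (c α : ℝ) • α → (∀ α ∈ Δ, 0 ≤ c α) →
      (∑ α ∈ Δ, (c α).toNat = N) → ∀ α ∈ Δ, ⟪α, α⟫ ≠ (r : ℝ) → (r : ℤ) ∣ c α := by
  intro N
  induction N using Nat.strong_induction_on with
  | _ N IH =>
  intro γ hγ hγr c hc hcpos hcN α hαΔ hαr
  classical
  -- find a simple root with positive inner product against γ
  have hsum : ⟪γ, γ⟫ = ∑ β ∈ Δ, (c β : ℝ) * ⟪γ, β⟫ := by
    nth_rewrite 2 [hc]
    rw [inner_sum]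
    exact Finset.sum_congr rfl (fun β hβ => by rw [real_inner_smul_right])
  have hex : ∃ α₀ ∈ Δ, 0 < ⟪γ, α₀⟫ := by
    by_contra h
    push_neg at h
    have hle : ⟪γ, γ⟫ ≤ 0 := by
      rw [hsum]
      apply Finset.sum_nonpos
      intro β hβ
      exact mul_nonpos_of_nonneg_of_nonpos (by exact_mod_cast hcpos β hβ) (h β hβ)
    rw [hγr] at hle
    linarith
  obtain ⟨α₀, hα₀Δ, hα₀γ⟩ := hex
  have hα₀Φ : α₀ ∈ Φ := hΔ.1 hα₀Δ
  have hα₀pos : (0:ℝ) < ⟪α₀, α₀⟫ := RS.inner_self_pos hΦ hα₀Φ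
  obtain ⟨m, hm⟩ := hΦ.crystallographic α₀ hα₀Φ γ hγ
  have hmpos : 0 < m := by
    have : (0:ℝ) < (m : ℝ) := by
      rw [← hm]
      apply div_pos _ hα₀pos
      have : ⟪α₀, γ⟫ = ⟪γ, α₀⟫ := real_inner_comm γ α₀
      linarith
    exact_mod_cast this
  have hγ'Φ : γ - (m : ℝ) • α₀ ∈ Φ := by
    have h := hΦ.reflect_mem α₀ hα₀Φ γ hγ
    rwa [hm] at h
  have hγ'r : ⟪γ - (m : ℝ) • α₀, γ - (m : ℝ) • α₀⟫ = (r : ℝ) := by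
    have h := RS.reflect_norm (ne_of_gt hα₀pos) γ
    rw [hm] at h
    rw [h, hγr]
  set c' : V → ℤ := fun β => if β = α₀ then c α₀ - m else c β with hc'def
  have hc' : γ - (m : ℝ) • α₀ = ∑ β ∈ Δ, (c' β : ℝ) • β := by
    have hsplit : ∀ β ∈ Δ, (c' β : ℝ) • β
        = (c β : ℝ) • β - (if β = α₀ then (m : ℝ) • α₀ else 0) := by
      intro β hβ
      by_cases hb : β = α₀
      · subst hb
        simp only [hc'def, if_pos rfl]
        push_cast
        rw [sub_smul]
      · simp [hc'def, hb]
    rw [Finset.sum_congr rfl hsplit, Finset.sum_sub_distrib,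
      Finset.sum_ite_eq' Δ α₀ (fun _ => (m : ℝ) • α₀), if_pos hα₀Δ, ← hc]
  obtain ⟨d, hd, hdsign⟩ := hΔ.2.2 _ hγ'Φ
  have hdc' : ∀ β ∈ Δ, d β = c' β :=
    RS.coeff_unique hΔ.2.1 d c' (by rw [← hd, hc'])
  rcases hdsign with hpos | hneg
  · -- positive case: apply induction hypothesis
    have hc'pos : ∀ β ∈ Δ, 0 ≤ c' β := fun β hβ => (hdc' β hβ) ▸ hpos β hβ
    have hsum' : ∑ β ∈ Δ, c' β = (∑ β ∈ Δ, c β) - m := by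
      have hsplit : ∀ β ∈ Δ, c' β = c β - (if β = α₀ then m else 0) := by
        intro β hβ
        by_cases hb : β = α₀
        · subst hb; simp [hc'def]
        · simp [hc'def, hb]
      rw [Finset.sum_congr rfl hsplit, Finset.sum_sub_distrib,
        Finset.sum_ite_eq' Δ α₀ (fun _ => m), if_pos hα₀Δ]
    have e1 : ((∑ β ∈ Δ, (c' β).toNat : ℕ) : ℤ) = ∑ β ∈ Δ, c' β := by
      push_cast
      exact Finset.sum_congr rfl (fun β hβ => Int.toNat_of_nonneg (hc'pos β hβ))
    have e2 : ((N : ℕ) : ℤ) = ∑ β ∈ Δ, c β := by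
      rw [← hcN]
      push_cast
      exact Finset.sum_congr rfl (fun β hβ => Int.toNat_of_nonneg (hcpos β hβ))
    have hlt : (∑ β ∈ Δ, (c' β).toNat) < N := by
      have : ((∑ β ∈ Δ, (c' β).toNat : ℕ) : ℤ) < ((N : ℕ) : ℤ) := by
        rw [e1, e2, hsum']
        omega
      exact_mod_cast this
    have hIH := IH _ hlt _ hγ'Φ hγ'r c' hc' hc'pos rfl α hαΔ hαr
    by_cases haa : α = α₀
    · subst haa
      have hαs : ⟪α, α⟫ = 1 := by
        rcases hlen α hα₀Φ with h | h
        · exact h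
        · exact absurd h hαr
      have hdm : (r : ℤ) ∣ m := RS.r_dvd_pair hΦ hα₀Φ hγ hαs hγr hm
      have heq' : c' α = c α - m := by simp [hc'def]
      rw [heq'] at hIH
      have := dvd_add hIH hdm
      simpa using this
    · have : c' α = c α := by simp [hc'def, haa]
      rwa [this] at hIH
  · -- negative case: γ must be a (long) simple root
    have hzero : ∀ β ∈ Δ, β ≠ α₀ → c β = 0 := by
      intro β hβ hne
      have h1 : c' β = c β := by simp [hc'def, hne]
      have h2 := hdc' β hβ
      have h3 := hneg β hβ
      have h4 := hcpos β hβ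
      omega
    have hγa : γ = (c α₀ : ℝ) • α₀ := by
      rw [hc, Finset.sum_eq_single α₀]
      · intro β hβ hne
        rw [hzero β hβ hne]
        simp
      · intro h
        exact absurd hα₀Δ h
    have hmem : (c α₀ : ℝ) • α₀ ∈ Φ := hγa ▸ hγ
    rcases hΦ.reduced α₀ hα₀Φ _ hmem with h1 | h1
    · have hαne : α ≠ α₀ := by
        intro h
        apply hαr
        rw [h, ← hγr, hγa, h1, one_smul]
      rw [hzero α hαΔ hαne]
      exact dvd_zero _
    · exfalso
      have h4 := hcpos α₀ hα₀Δ
      have : (0:ℝ) ≤ (c α₀ : ℝ) := by exact_mod_cast h4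
      rw [h1] at this
      linarith

private lemma RS.sum_r_mul (r : ℕ) (s : Finset V) (f : V → ℝ)
    (h : ∀ a ∈ s, ∃ k : ℤ, f a = (r : ℝ) * k) :
    ∃ K : ℤ, ∑ a ∈ s, f a = (r : ℝ) * K := by
  classical
  induction s using Finset.induction_on with
  | empty => exact ⟨0, by simp⟩
  | @insert a t ha ih =>
    obtain ⟨k, hk⟩ := h a (Finset.mem_insert_self a t)
    obtain ⟨K, hK⟩ := ih (fun x hx => h x (Finset.mem_insert_of_mem hx))
    refine ⟨k + K, ?_⟩
    rw [Finset.sum_insert ha, hk, hK]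
    push_cast
    ring

private lemma RS.sym_sum (r : ℕ) (f : V → V → ℝ) (s : Finset V)
    (hdiag : ∀ a ∈ s, ∃ k : ℤ, f a a = (r : ℝ) * k)
    (hpair : ∀ a ∈ s, ∀ b ∈ s, ∃ k : ℤ, f a b + f b a = (r : ℝ) * k) :
    ∃ K : ℤ, ∑ a ∈ s, ∑ b ∈ s, f a b = (r : ℝ) * K := by
  classical
  induction s using Finset.induction_on with
  | empty => exact ⟨0, by simp⟩
  | @insert a t ha ih =>
    obtain ⟨K, hK⟩ := ih (fun x hx => hdiag x (Finset.mem_insert_of_mem hx))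
      (fun x hx y hy => hpair x (Finset.mem_insert_of_mem hx) y (Finset.mem_insert_of_mem hy))
    obtain ⟨k0, hk0⟩ := hdiag a (Finset.mem_insert_self a t)
    obtain ⟨k1, hk1⟩ := RS.sum_r_mul r t (fun b => f a b + f b a)
      (fun b hb => hpair a (Finset.mem_insert_self a t) b (Finset.mem_insert_of_mem hb))
    refine ⟨k0 + k1 + K, ?_⟩
    rw [Finset.sum_insert ha, Finset.sum_insert ha]
    have hinner : ∀ x ∈ t, ∑ b ∈ Insert.insert a t, f x b = f x a + ∑ b ∈ t, f x b :=
      fun x hx => Finset.sum_insert ha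
    rw [Finset.sum_congr rfl hinner, Finset.sum_add_distrib]
    have e1 : ∑ b ∈ t, (f a b + f b a) = (∑ b ∈ t, f a b) + ∑ b ∈ t, f b a :=
      Finset.sum_add_distrib
    rw [e1] at hk1
    push_cast
    rw [mul_add, mul_add]
    linarith

end AuxRS2

/-- A root `γ = Σ n_α α` is long (squared length equal to the maximal
squared length `r`, the minimal being normalized to `1`) if and only if `r` divides the
coefficient `n_α` for every short simple root `α`. -/
theorem long_iff_r_dvd_short_coeffs (Φ : Set V) (hΦ : IsIrredRootSystem Φ)
    (Δ : Finset V) (hΔ : IsBase Φ Δ)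
    (hnorm : IsLeast {x : ℝ | ∃ α ∈ Φ, x = ⟪α, α⟫} 1)
    (r : ℕ) (hr : IsGreatest {x : ℝ | ∃ α ∈ Φ, x = ⟪α, α⟫} (r : ℝ))
    (γ : V) (hγ : γ ∈ Φ) (n : V → ℤ) (hn : γ = ∑ α ∈ Δ, (n α : ℝ) • α) :
    ⟪γ, γ⟫ = (r : ℝ) ↔ ∀ α ∈ Δ, ⟪α, α⟫ ≠ (r : ℝ) → (r : ℤ) ∣ n α := by
  classical
  have hr1 : (1:ℝ) ≤ (r : ℝ) := hr.2 hnorm.1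
  have hlen : ∀ β ∈ Φ, ⟪β, β⟫ = 1 ∨ ⟪β, β⟫ = (r : ℝ) := RS.two_lengths hΦ hnorm r hr
  constructor
  · -- forward direction
    intro hγr α hαΔ hαr
    obtain ⟨c, hc, hsign⟩ := hΔ.2.2 γ hγ
    have hnc : ∀ β ∈ Δ, n β = c β := RS.coeff_unique hΔ.2.1 n c (by rw [← hn, hc])
    rcases hsign with hpos | hneg
    · rw [hnc α hαΔ]
      exact RS.forward hΦ hΔ r hr1 hlen _ γ hγ hγr c hc hpos rfl α hαΔ hαr
    · have hγneg : -γ ∈ Φ := RS.neg_mem hΦ hγ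
      have h1 : -γ = ∑ β ∈ Δ, ((- c β : ℤ) : ℝ) • β := by
        rw [hc, ← Finset.sum_neg_distrib]
        apply Finset.sum_congr rfl
        intro β hβ
        push_cast
        rw [neg_smul]
      have h2 : ⟪-γ, -γ⟫ = (r : ℝ) := by rw [inner_neg_neg]; exact hγr
      have := RS.forward hΦ hΔ r hr1 hlen _ (-γ) hγneg h2 (fun β => - c β) h1
        (fun β hβ => neg_nonneg.mpr (hneg β hβ)) rfl α hαΔ hαr
      rw [hnc α hαΔ]
      exact (dvd_neg).mp this
  · -- converse direction
    intro hdvd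
    have hexp : ⟪γ, γ⟫ = ∑ α ∈ Δ, ∑ β ∈ Δ, ((n α : ℝ) * (n β : ℝ)) * ⟪α, β⟫ := by
      rw [hn, sum_inner]
      apply Finset.sum_congr rfl
      intro α hα
      rw [real_inner_smul_left, inner_sum, Finset.mul_sum]
      apply Finset.sum_congr rfl
      intro β hβ
      rw [real_inner_smul_right]
      ring
    have hrpos : (0:ℝ) < (r : ℝ) := by linarith
    have hrne : (r : ℝ) ≠ 0 := ne_of_gt hrpos
    have hdiag : ∀ a ∈ Δ, ∃ k : ℤ,
        ((n a : ℝ) * (n a : ℝ)) * ⟪a, a⟫ = (r : ℝ) * (k : ℝ) := by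
      intro a ha
      have haΦ : a ∈ Φ := hΔ.1 ha
      by_cases haa : ⟪a, a⟫ = (r : ℝ)
      · exact ⟨n a * n a, by rw [haa]; push_cast; ring⟩
      · have has : ⟪a, a⟫ = 1 := by
          rcases hlen a haΦ with h | h
          · exact h
          · exact absurd h haa
        obtain ⟨t, ht⟩ := hdvd a ha haa
        refine ⟨(r : ℤ) * t * t, ?_⟩
        have htr : (n a : ℝ) = (r : ℝ) * (t : ℝ) := by exact_mod_cast ht
        rw [has, htr]
        push_cast
        ring
    have hpair : ∀ a ∈ Δ, ∀ b ∈ Δ, ∃ k : ℤ,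
        ((n a : ℝ) * (n b : ℝ)) * ⟪a, b⟫ + ((n b : ℝ) * (n a : ℝ)) * ⟪b, a⟫
          = (r : ℝ) * (k : ℝ) := by
      intro a ha b hb
      have haΦ : a ∈ Φ := hΔ.1 ha
      have hbΦ : b ∈ Φ := hΔ.1 hb
      by_cases haa : ⟪a, a⟫ = (r : ℝ)
      · by_cases hbb : ⟪b, b⟫ = (r : ℝ)
        · -- both long
          obtain ⟨m, hm⟩ := hΦ.crystallographic a haΦ b hbΦ
          have h2 : 2 * ⟪a, b⟫ = (m : ℝ) * (r : ℝ) := by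
            rw [haa] at hm
            field_simp at hm
            linarith
          refine ⟨n a * n b * m, ?_⟩
          rw [real_inner_comm a b]
          push_cast
          linear_combination ((n a : ℝ) * (n b : ℝ)) * h2
        · -- b short
          have hbs : ⟪b, b⟫ = 1 := by
            rcases hlen b hbΦ with h | h
            · exact h
            · exact absurd h hbb
          obtain ⟨t, ht⟩ := hdvd b hb hbb
          obtain ⟨m, hm⟩ := hΦ.crystallographic b hbΦ a haΦ
          have h2 : 2 * ⟪a, b⟫ = (m : ℝ) := by
            rw [hbs] at hm
            rw [real_inner_comm b a]
            simpa using hm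
          refine ⟨n a * t * m, ?_⟩
          have htr : (n b : ℝ) = (r : ℝ) * (t : ℝ) := by exact_mod_cast ht
          rw [real_inner_comm a b]
          push_cast
          rw [htr]
          linear_combination ((n a : ℝ) * (r : ℝ) * (t : ℝ)) * h2
      · -- a short
        have has : ⟪a, a⟫ = 1 := by
          rcases hlen a haΦ with h | h
          · exact h
          · exact absurd h haa
        obtain ⟨t, ht⟩ := hdvd a ha haa
        obtain ⟨m, hm⟩ := hΦ.crystallographic a haΦ b hbΦ
        have h2 : 2 * ⟪a, b⟫ = (m : ℝ) := by
          rw [has] at hm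
          simpa using hm
        refine ⟨t * n b * m, ?_⟩
        have htr : (n a : ℝ) = (r : ℝ) * (t : ℝ) := by exact_mod_cast ht
        rw [real_inner_comm a b]
        push_cast
        rw [htr]
        linear_combination ((r : ℝ) * (t : ℝ) * (n b : ℝ)) * h2
    obtain ⟨K, hK⟩ := RS.sym_sum r (fun α β => ((n α : ℝ) * (n β : ℝ)) * ⟪α, β⟫) Δ hdiag hpair
    have hb1 : (1:ℝ) ≤ ⟪γ, γ⟫ := hnorm.2 ⟨γ, hγ, rfl⟩
    have hb2 : ⟪γ, γ⟫ ≤ (r : ℝ) := hr.2 ⟨γ, hγ, rfl⟩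
    have hKr : ⟪γ, γ⟫ = (r : ℝ) * (K : ℝ) := by rw [hexp, hK]
    have hKge : (1:ℤ) ≤ K := by
      by_contra h
      push_neg at h
      have hK0 : K ≤ 0 := by omega
      have : (K : ℝ) ≤ 0 := by exact_mod_cast hK0
      nlinarith
    have hKle : K ≤ 1 := by
      by_contra h
      push_neg at h
      have h2 : (2:ℝ) ≤ (K : ℝ) := by exact_mod_cast h
      nlinarith
    have hK1 : K = 1 := le_antisymm hKle hKge
    rw [hKr, hK1]
    norm_num
end

section
/- Let Φ be an irreducible reduced root system and β a positive long root. Then the length of the reflection s_β in the Weyl group satisfies l(s_β) = 2·ht^∨(β) − 1, where ht^∨(β) is the height of the coroot β^∨. -/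
/-!
Induction on the coroot height `f (coroot β)`. For a simple root `β`, `s_β` is a simple
reflection and `f (coroot β) = 1`. Otherwise some simple root `α` has `(α, β) > 0`; as `β` is
long this forces `⟨α, β^∨⟩ = 1`, so `γ = s_α β` is a long positive root with
`γ^∨ = β^∨ - α^∨`. Now `s_β = s_α s_γ s_α`, and because `s_γ α = γ + α` and
`s_α s_γ α = β - α` are positive roots, each multiplication by `s_α` raises the length by one
(deletion condition), whence `l(s_β) = l(s_γ) + 2`.
-/

open scoped RealInnerProductSpace

variable {V : Type*} [NormedAddCommGroup V] [InnerProductSpace ℝ V]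

open Finset

noncomputable def reflectionMap (α : V) : V →ₗ[ℝ] V where
  toFun v := v - (2 * ⟪α, v⟫ / ⟪α, α⟫) • α
  map_add' u v := by
    simp only [inner_add_right]
    module
  map_smul' t v := by
    simp only [real_inner_smul_right, RingHom.id_apply]
    module

lemma reflectionMap_involutive (α : V) : Function.Involutive (reflectionMap α) := by
  intro v
  by_cases hα : α = 0
  · simp [reflectionMap, hα]
  have hαα : ⟪α, α⟫ ≠ 0 := inner_self_ne_zero.2 hα
  simp only [reflectionMap, LinearMap.coe_mk, AddHom.coe_mk, inner_sub_right,
    real_inner_smul_right]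
  have : 2 * (⟪α, v⟫ - 2 * ⟪α, v⟫ / ⟪α, α⟫ * ⟪α, α⟫) / ⟪α, α⟫ = -(2 * ⟪α, v⟫ / ⟪α, α⟫) := by
    field_simp
    ring
  rw [this]
  module

noncomputable def reflection (α : V) : V ≃ₗ[ℝ] V :=
  LinearEquiv.ofInvolutive (reflectionMap α) (reflectionMap_involutive α)

lemma reflection_apply (α v : V) : reflection α v = v - (2 * ⟪α, v⟫ / ⟪α, α⟫) • α := rfl

lemma reflection_mul_self (α : V) : reflection α * reflection α = 1 :=
  LinearEquiv.ext (reflectionMap_involutive α)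

lemma reflection_inv (α : V) : (reflection α)⁻¹ = reflection α :=
  inv_eq_of_mul_eq_one_right (reflection_mul_self α)

@[simp]
lemma reflection_apply_self (α : V) : reflection α α = -α := by
  by_cases hα : α = 0
  · simp [hα]
  rw [reflection_apply, mul_div_assoc, div_self (inner_self_ne_zero.2 hα)]
  module

lemma inner_reflection_reflection (α u v : V) :
    ⟪reflection α u, reflection α v⟫ = ⟪u, v⟫ := by
  by_cases hα : α = 0
  · simp [reflection_apply, hα]
  have hαα : ⟪α, α⟫ ≠ 0 := inner_self_ne_zero.2 hα
  simp only [reflection_apply, inner_sub_left, inner_sub_right, real_inner_smul_left,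
    real_inner_smul_right, real_inner_comm α u]
  field_simp
  ring

lemma reflection_conj {w : V ≃ₗ[ℝ] V} (hw : ∀ u v, ⟪w u, w v⟫ = ⟪u, v⟫) (γ : V) :
    w * reflection γ * w⁻¹ = reflection (w γ) := by
  ext v
  have hv : w (w⁻¹ v) = v := by simp
  have hγv : ⟪w γ, v⟫ = ⟪γ, w⁻¹ v⟫ := by rw [← hw γ (w⁻¹ v), hv]
  rw [LinearEquiv.mul_apply, LinearEquiv.mul_apply, reflection_apply, reflection_apply, map_sub,
    map_smul, hv, hγv, hw]

lemma reflection_reflection_apply (α β : V) :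
    reflection (reflection α β) α = α + ⟪α, coroot β⟫ • reflection α β := by
  have h : ⟪reflection α β, α⟫ = -⟪β, α⟫ := by
    simpa using inner_reflection_reflection α β (-α)
  rw [reflection_apply _ α, h, inner_reflection_reflection, coroot, real_inner_smul_right,
    real_inner_comm α β]
  module

lemma coroot_reflection (α β : V) :
    coroot (reflection α β) = coroot β - ⟪α, coroot β⟫ • coroot α := by
  rw [coroot, coroot, coroot, inner_reflection_reflection, reflection_apply,
    real_inner_smul_right]
  module

namespace IsIrredRootSystem

variable {Φ : Set V}

lemma ne_zero (hΦ : IsIrredRootSystem Φ) {α : V} (hα : α ∈ Φ) : α ≠ 0 :=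
  fun h => hΦ.nonzero (h ▸ hα)

lemma reflection_mem (hΦ : IsIrredRootSystem Φ) {α β : V} (hα : α ∈ Φ) (hβ : β ∈ Φ) :
    reflection α β ∈ Φ :=
  hΦ.reflect_mem α hα β hβ

lemma neg_mem (hΦ : IsIrredRootSystem Φ) {α : V} (hα : α ∈ Φ) : -α ∈ Φ := by
  simpa using hΦ.reflection_mem hα hα

lemma one_le_of_inner_pos (hΦ : IsIrredRootSystem Φ) {α β : V} (hα : α ∈ Φ) (hβ : β ∈ Φ)
    (hαβ : 0 < ⟪α, β⟫) : 1 ≤ 2 * ⟪α, β⟫ / ⟪α, α⟫ := by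
  obtain ⟨m, hm⟩ := hΦ.crystallographic α hα β hβ
  have hpos : (0 : ℝ) < m :=
    hm ▸ div_pos (by linarith) (real_inner_self_pos.2 (hΦ.ne_zero hα))
  rw [hm]
  exact_mod_cast Int.cast_pos.1 hpos

/-- `⟨α, β^∨⟩` is a positive integer, at most `⟨β, α^∨⟩` since `β` is long, and their product
is at most `4` by Cauchy–Schwarz; `⟨α, β^∨⟩ = ⟨β, α^∨⟩ = 2` would force `α = β`. -/
lemma inner_coroot_eq_one_of_long (hΦ : IsIrredRootSystem Φ) {α β : V} (hα : α ∈ Φ)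
    (hβ : β ∈ Φ) (hlong : ⟪α, α⟫ ≤ ⟪β, β⟫) (hαβ : 0 < ⟪α, β⟫) (hne : α ≠ β) :
    ⟪α, coroot β⟫ = 1 := by
  obtain ⟨m, hm⟩ := hΦ.crystallographic α hα β hβ
  obtain ⟨n, hn⟩ := hΦ.crystallographic β hβ α hα
  have hαα := real_inner_self_pos.2 (hΦ.ne_zero hα)
  have hββ := real_inner_self_pos.2 (hΦ.ne_zero hβ)
  rw [real_inner_comm] at hn
  rw [div_eq_iff hαα.ne'] at hm
  rw [div_eq_iff hββ.ne'] at hn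
  have hinner : ⟪α, coroot β⟫ = n := by
    rw [coroot, real_inner_smul_right]
    field_simp
    linarith
  have hn0 : (0 : ℝ) < n := by nlinarith
  have hnm : (n : ℝ) ≤ m := by nlinarith
  have hnm4 : (n : ℝ) * m ≤ 4 := by
    have := real_inner_mul_inner_self_le α β
    nlinarith [mul_pos hαα hββ]
  have hn1 : 1 ≤ n := Int.cast_pos.1 hn0
  have hn2 : n ≤ 2 := by exact_mod_cast (show (n : ℝ) ≤ 2 by nlinarith)
  rw [hinner]
  interval_cases n
  · norm_num
  · have hm2 : (m : ℝ) = 2 := by push_cast at hnm hnm4; linarith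
    have hself : ⟪α - β, α - β⟫ = 0 := by
      rw [inner_sub_left, inner_sub_right, inner_sub_right, real_inner_comm α β]
      push_cast at hn
      rw [hm2] at hm
      linarith
    exact absurd (sub_eq_zero.1 (inner_self_eq_zero.1 hself)) hne

end IsIrredRootSystem

lemma sum_smul_add_ite_smul [DecidableEq V] {Δ : Finset V} {α : V} (hα : α ∈ Δ) (c : V → ℝ)
    (t : ℝ) :
    ∑ a ∈ Δ, (c a + if a = α then t else 0) • a = ∑ a ∈ Δ, c a • a + t • α := by
  simp [add_smul, sum_add_distrib, hα]

lemma exists_mem_inner_pos {Δ : Finset V} {β : V} {c : V → ℕ}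
    (hc : β = ∑ a ∈ Δ, (c a : ℝ) • a) (hβ : β ≠ 0) : ∃ α ∈ Δ, 0 < ⟪α, β⟫ := by
  by_contra! h
  have : ⟪β, β⟫ ≤ 0 := by
    nth_rewrite 1 [hc]
    rw [sum_inner]
    exact sum_nonpos fun a ha => by
      rw [real_inner_smul_left]
      exact mul_nonpos_of_nonneg_of_nonpos (Nat.cast_nonneg _) (h a ha)
  exact hβ (real_inner_self_nonpos.1 this)

namespace IsBase

variable {Φ : Set V} {Δ : Finset V}

lemma coeff_eq_of_sum_eq (hΔ : IsBase Φ Δ) {c d : V → ℝ}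
    (h : ∑ a ∈ Δ, c a • a = ∑ a ∈ Δ, d a • a) {a : V} (ha : a ∈ Δ) : c a = d a := by
  have hli : LinearIndepOn ℝ id (Δ : Set V) := hΔ.2.1
  refine sub_eq_zero.1 <| linearIndepOn_iff'.1 hli Δ (c - d) subset_rfl ?_ a ha
  simp [sub_smul, sum_sub_distrib, h]

lemma eq_zero_of_nonneg_of_neg_nonneg (hΔ : IsBase Φ Δ) {γ : V} {c d : V → ℝ}
    (hc : γ = ∑ a ∈ Δ, c a • a) (hd : -γ = ∑ a ∈ Δ, d a • a)
    (hc0 : ∀ a ∈ Δ, 0 ≤ c a) (hd0 : ∀ a ∈ Δ, 0 ≤ d a) : γ = 0 := by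
  have hsum : ∑ a ∈ Δ, (c + d) a • a = ∑ a ∈ Δ, (0 : V → ℝ) a • a := by
    simp [add_smul, sum_add_distrib, ← hc, ← hd]
  rw [hc]
  refine sum_eq_zero fun a ha => ?_
  have := hΔ.coeff_eq_of_sum_eq hsum ha
  simp only [Pi.add_apply, Pi.zero_apply] at this
  rw [show c a = 0 by linarith [hc0 a ha, hd0 a ha], zero_smul]

lemma neg_notMem_posRoots (hΦ : IsIrredRootSystem Φ) (hΔ : IsBase Φ Δ) {γ : V}
    (hγ : γ ∈ posRoots Φ Δ) : -γ ∉ posRoots Φ Δ := by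
  rintro ⟨-, d, hd⟩
  obtain ⟨hγΦ, c, hc⟩ := hγ
  exact hΦ.ne_zero hγΦ <| hΔ.eq_zero_of_nonneg_of_neg_nonneg hc hd
    (fun a _ => Nat.cast_nonneg _) (fun a _ => Nat.cast_nonneg _)

lemma mem_posRoots_or_neg_mem_posRoots (hΦ : IsIrredRootSystem Φ) (hΔ : IsBase Φ Δ) {γ : V}
    (hγ : γ ∈ Φ) : γ ∈ posRoots Φ Δ ∨ -γ ∈ posRoots Φ Δ := by
  obtain ⟨c, hc, hc0 | hc0⟩ := hΔ.2.2 γ hγ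
  · refine .inl ⟨hγ, fun a => (c a).toNat, hc.trans (sum_congr rfl fun a ha => ?_)⟩
    rw [show ((c a).toNat : ℝ) = c a by exact_mod_cast Int.toNat_of_nonneg (hc0 a ha)]
  · refine .inr ⟨hΦ.neg_mem hγ, fun a => (-c a).toNat, ?_⟩
    rw [hc, ← sum_neg_distrib]
    refine sum_congr rfl fun a ha => ?_
    rw [show ((-c a).toNat : ℝ) = -c a by
      exact_mod_cast Int.toNat_of_nonneg (neg_nonneg.2 (hc0 a ha)), neg_smul]

lemma mem_posRoots_of_nonneg (hΦ : IsIrredRootSystem Φ) (hΔ : IsBase Φ Δ) {γ : V}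
    (hγ : γ ∈ Φ) {c : V → ℝ} (hc : γ = ∑ a ∈ Δ, c a • a) (hc0 : ∀ a ∈ Δ, 0 ≤ c a) :
    γ ∈ posRoots Φ Δ := by
  refine (hΔ.mem_posRoots_or_neg_mem_posRoots hΦ hγ).resolve_right fun ⟨_, d, hd⟩ => ?_
  exact hΦ.ne_zero hγ <|
    hΔ.eq_zero_of_nonneg_of_neg_nonneg hc hd hc0 (fun a _ => Nat.cast_nonneg _)

lemma add_smul_mem_posRoots (hΦ : IsIrredRootSystem Φ) (hΔ : IsBase Φ Δ) {γ α : V}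
    (hγ : γ ∈ posRoots Φ Δ) (hα : α ∈ Δ) {t : ℝ} (ht : 0 ≤ t) (hmem : γ + t • α ∈ Φ) :
    γ + t • α ∈ posRoots Φ Δ := by
  classical
  obtain ⟨-, c, hc⟩ := hγ
  refine hΔ.mem_posRoots_of_nonneg hΦ hmem (by rw [sum_smul_add_ite_smul hα, hc]) fun a _ => ?_
  split_ifs <;> positivity

lemma mem_posRoots_of_mem (hΔ : IsBase Φ Δ) {α : V} (hα : α ∈ Δ) :
    α ∈ posRoots Φ Δ := by
  classical
  refine ⟨hΔ.1 hα, fun a => if a = α then 1 else 0, ?_⟩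
  simp [hα]

lemma reflection_mem_posRoots (hΦ : IsIrredRootSystem Φ) (hΔ : IsBase Φ Δ) {α β : V}
    (hα : α ∈ Δ) (hβ : β ∈ posRoots Φ Δ) (hne : β ≠ α) : reflection α β ∈ posRoots Φ Δ := by
  refine (hΔ.mem_posRoots_or_neg_mem_posRoots hΦ
    (hΦ.reflection_mem (hΔ.1 hα) hβ.1)).resolve_right ?_
  rintro ⟨-, d, hd⟩
  obtain ⟨hβΦ, c, hc⟩ := hβ
  classical
  have hsum : ∑ a ∈ Δ, ((c a : ℝ) + d a) • a =
      ∑ a ∈ Δ, ((0 : ℝ) + if a = α then 2 * ⟪α, β⟫ / ⟪α, α⟫ else 0) • a := by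
    rw [sum_smul_add_ite_smul hα]
    simp only [add_smul, sum_add_distrib, ← hc, ← hd, zero_smul, sum_const_zero, zero_add,
      reflection_apply]
    abel
  have hcα : ∀ a ∈ Δ, a ≠ α → c a = 0 := fun a ha haα => by
    have := hΔ.coeff_eq_of_sum_eq hsum ha
    rw [if_neg haα, add_zero] at this
    have : (c a : ℝ) = 0 := by linarith [(c a).cast_nonneg (α := ℝ), (d a).cast_nonneg (α := ℝ)]
    exact_mod_cast this
  have hβα : β = (c α : ℝ) • α := by
    rw [hc, sum_eq_single_of_mem α hα fun a ha haα => by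
      rw [hcα a ha haα, Nat.cast_zero, zero_smul]]
  rcases hΦ.reduced α (hΔ.1 hα) _ (hβα ▸ hβΦ) with h | h
  · exact hne (by rw [hβα, h, one_smul])
  · linarith [(c α).cast_nonneg (α := ℝ)]

end IsBase

section Length

variable {Φ : Set V} {Δ : Finset V}

lemma reflection_mem_simpleReflections {α : V} (hα : α ∈ Δ) :
    reflection α ∈ simpleReflections Δ :=
  ⟨α, hα, fun _ => rfl⟩

lemma exists_eq_reflection_of_mem_simpleReflections {s : V ≃ₗ[ℝ] V}
    (hs : s ∈ simpleReflections Δ) : ∃ α ∈ Δ, s = reflection α :=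
  let ⟨α, hα, h⟩ := hs
  ⟨α, hα, LinearEquiv.ext h⟩

lemma inv_eq_self_of_mem_simpleReflections {s : V ≃ₗ[ℝ] V} (hs : s ∈ simpleReflections Δ) :
    s⁻¹ = s := by
  obtain ⟨α, -, rfl⟩ := exists_eq_reflection_of_mem_simpleReflections hs
  exact reflection_inv α

lemma prod_reverse_eq_inv {L : List (V ≃ₗ[ℝ] V)} (hL : ∀ s ∈ L, s ∈ simpleReflections Δ) :
    L.reverse.prod = L.prod⁻¹ := by
  rw [List.prod_inv_reverse, List.map_congr_left fun s hs =>
    inv_eq_self_of_mem_simpleReflections (hL s hs), List.map_id']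

lemma inv_mem_closure_simpleReflections {w : V ≃ₗ[ℝ] V}
    (hw : w ∈ Submonoid.closure (simpleReflections Δ)) :
    w⁻¹ ∈ Submonoid.closure (simpleReflections Δ) := by
  obtain ⟨L, hL, rfl⟩ := Submonoid.exists_list_of_mem_closure hw
  rw [← prod_reverse_eq_inv hL]
  exact Submonoid.list_prod_mem _ fun s hs =>
    Submonoid.subset_closure (hL s (List.mem_reverse.1 hs))

lemma inner_map_map_of_mem_closure {w : V ≃ₗ[ℝ] V}
    (hw : w ∈ Submonoid.closure (simpleReflections Δ)) (u v : V) : ⟪w u, w v⟫ = ⟪u, v⟫ := by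
  induction hw using Submonoid.closure_induction generalizing u v with
  | mem s hs =>
    obtain ⟨α, -, rfl⟩ := exists_eq_reflection_of_mem_simpleReflections hs
    exact inner_reflection_reflection α u v
  | one => rfl
  | mul x y _ _ hx hy => rw [LinearEquiv.mul_apply, LinearEquiv.mul_apply, hx, hy]

lemma map_mem_of_mem_closure (hΦ : IsIrredRootSystem Φ) (hΔ : IsBase Φ Δ) {w : V ≃ₗ[ℝ] V}
    (hw : w ∈ Submonoid.closure (simpleReflections Δ)) {γ : V} (hγ : γ ∈ Φ) : w γ ∈ Φ := by
  induction hw using Submonoid.closure_induction generalizing γ with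
  | mem s hs =>
    obtain ⟨α, hα, rfl⟩ := exists_eq_reflection_of_mem_simpleReflections hs
    exact hΦ.reflection_mem (hΔ.1 hα) hγ
  | one => exact hγ
  | mul x y _ _ hx hy => exact hx (hy hγ)

lemma len_le_length {L : List (V ≃ₗ[ℝ] V)} (hL : ∀ s ∈ L, s ∈ simpleReflections Δ) :
    len Δ L.prod ≤ L.length := by
  unfold len
  exact Nat.sInf_le ⟨L, hL, rfl, rfl⟩

lemma exists_length_eq_len {w : V ≃ₗ[ℝ] V} (hw : w ∈ Submonoid.closure (simpleReflections Δ)) :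
    ∃ L : List (V ≃ₗ[ℝ] V),
      (∀ s ∈ L, s ∈ simpleReflections Δ) ∧ L.length = len Δ w ∧ L.prod = w := by
  obtain ⟨L, hL, hw⟩ := Submonoid.exists_list_of_mem_closure hw
  exact Nat.sInf_mem (s := {n | ∃ M : List (V ≃ₗ[ℝ] V),
    (∀ s ∈ M, s ∈ simpleReflections Δ) ∧ M.length = n ∧ M.prod = w}) ⟨L.length, L, hL, rfl, hw⟩

lemma len_one : len Δ (1 : V ≃ₗ[ℝ] V) = 0 :=
  Nat.le_zero.1 (len_le_length (L := []) (by simp))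

lemma len_le_one {s : V ≃ₗ[ℝ] V} (hs : s ∈ simpleReflections Δ) : len Δ s ≤ 1 := by
  simpa using len_le_length (L := [s]) (by simpa using hs)

lemma len_mul_le {v w : V ≃ₗ[ℝ] V} (hv : v ∈ Submonoid.closure (simpleReflections Δ))
    (hw : w ∈ Submonoid.closure (simpleReflections Δ)) : len Δ (v * w) ≤ len Δ v + len Δ w := by
  obtain ⟨L, hL, hLv, rfl⟩ := exists_length_eq_len hv
  obtain ⟨M, hM, hMw, rfl⟩ := exists_length_eq_len hw
  rw [← hLv, ← hMw, ← List.length_append, ← List.prod_append]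
  exact len_le_length (List.forall_mem_append.2 ⟨hL, hM⟩)

lemma len_inv_le {w : V ≃ₗ[ℝ] V} (hw : w ∈ Submonoid.closure (simpleReflections Δ)) :
    len Δ w⁻¹ ≤ len Δ w := by
  obtain ⟨L, hL, hLw, rfl⟩ := exists_length_eq_len hw
  rw [← prod_reverse_eq_inv hL, ← hLw, ← List.length_reverse]
  exact len_le_length fun s hs => hL s (List.mem_reverse.1 hs)

lemma len_inv {w : V ≃ₗ[ℝ] V} (hw : w ∈ Submonoid.closure (simpleReflections Δ)) :
    len Δ w⁻¹ = len Δ w :=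
  (len_inv_le hw).antisymm (by simpa using len_inv_le (inv_mem_closure_simpleReflections hw))

/-- Deletion condition. Either the word without its first letter `s_b` already sends `α` to a
negative root, or `s_b` does; as `s_b` permutes the positive roots other than `b`, the latter
forces `L.prod α = b`, whence `s_b · L.prod · s_α = L.prod`. -/
lemma len_mul_reflection_lt_length (hΦ : IsIrredRootSystem Φ) (hΔ : IsBase Φ Δ) {α : V}
    (hα : α ∈ Δ) {L : List (V ≃ₗ[ℝ] V)} (hL : ∀ s ∈ L, s ∈ simpleReflections Δ)
    (hneg : -(L.prod α) ∈ posRoots Φ Δ) : len Δ (L.prod * reflection α) < L.length := by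
  induction L with
  | nil =>
    exact (hΔ.neg_notMem_posRoots hΦ (hΔ.mem_posRoots_of_mem hα) (by simpa using hneg)).elim
  | cons s L ih =>
    rw [List.forall_mem_cons] at hL
    obtain ⟨b, hb, rfl⟩ := exists_eq_reflection_of_mem_simpleReflections hL.1
    have hLW : L.prod ∈ Submonoid.closure (simpleReflections Δ) :=
      Submonoid.list_prod_mem _ fun t ht => Submonoid.subset_closure (hL.2 t ht)
    rw [List.prod_cons, List.length_cons, mul_assoc]
    rw [List.prod_cons, LinearEquiv.mul_apply] at hneg
    rcases hΔ.mem_posRoots_or_neg_mem_posRoots hΦ (map_mem_of_mem_closure hΦ hΔ hLW (hΔ.1 hα))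
      with hpos | hneg'
    · have hLα : L.prod α = b := by
        by_contra hne
        exact hΔ.neg_notMem_posRoots hΦ (hΔ.reflection_mem_posRoots hΦ hb hpos hne) hneg
      have hconj := reflection_conj (inner_map_map_of_mem_closure hLW) α
      rw [hLα] at hconj
      rw [← hconj]
      simp only [mul_assoc, inv_mul_cancel_left, reflection_mul_self, mul_one]
      exact (len_le_length hL.2).trans_lt (Nat.lt_succ_self _)
    · have hs := reflection_mem_simpleReflections hb
      calc len Δ (reflection b * (L.prod * reflection α))
          ≤ len Δ (reflection b) + len Δ (L.prod * reflection α) :=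
            len_mul_le (Submonoid.subset_closure hs)
              (mul_mem hLW (Submonoid.subset_closure (reflection_mem_simpleReflections hα)))
        _ < 1 + L.length := add_lt_add_of_le_of_lt (len_le_one hs) (ih hL.2 hneg')
        _ = L.length + 1 := add_comm _ _

lemma len_mul_reflection_of_pos (hΦ : IsIrredRootSystem Φ) (hΔ : IsBase Φ Δ) {α : V}
    (hα : α ∈ Δ) {w : V ≃ₗ[ℝ] V} (hw : w ∈ Submonoid.closure (simpleReflections Δ))
    (hpos : w α ∈ posRoots Φ Δ) : len Δ (w * reflection α) = len Δ w + 1 := by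
  have hs := reflection_mem_simpleReflections hα
  refine le_antisymm ((len_mul_le hw (Submonoid.subset_closure hs)).trans
    (Nat.add_le_add_left (len_le_one hs) _)) ?_
  obtain ⟨L, hL, hLen, hLw⟩ := exists_length_eq_len (mul_mem hw (Submonoid.subset_closure hs))
  have := len_mul_reflection_lt_length hΦ hΔ hα hL (by
    rwa [hLw, LinearEquiv.mul_apply, reflection_apply_self, map_neg, neg_neg])
  rwa [hLw, mul_assoc, reflection_mul_self, mul_one, hLen, Nat.lt_iff_add_one_le] at this

lemma len_reflection_mul_of_pos (hΦ : IsIrredRootSystem Φ) (hΔ : IsBase Φ Δ) {α : V}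
    (hα : α ∈ Δ) {w : V ≃ₗ[ℝ] V} (hw : w ∈ Submonoid.closure (simpleReflections Δ))
    (hpos : w⁻¹ α ∈ posRoots Φ Δ) : len Δ (reflection α * w) = len Δ w + 1 := by
  have hs := Submonoid.subset_closure (reflection_mem_simpleReflections hα)
  rw [← len_inv (mul_mem hs hw), mul_inv_rev, reflection_inv,
    len_mul_reflection_of_pos hΦ hΔ hα (inv_mem_closure_simpleReflections hw) hpos, len_inv hw]

lemma len_reflection (hΦ : IsIrredRootSystem Φ) (hΔ : IsBase Φ Δ) {α : V} (hα : α ∈ Δ) :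
    len Δ (reflection α) = 1 := by
  simpa [len_one] using len_mul_reflection_of_pos hΦ hΔ hα (one_mem _)
    (by simpa using hΔ.mem_posRoots_of_mem hα)

lemma len_reflection_mul_mul_reflection (hΦ : IsIrredRootSystem Φ) (hΔ : IsBase Φ Δ) {α : V}
    (hα : α ∈ Δ) {w : V ≃ₗ[ℝ] V} (hw : w ∈ Submonoid.closure (simpleReflections Δ))
    (h₁ : w α ∈ posRoots Φ Δ) (h₂ : reflection α (w⁻¹ α) ∈ posRoots Φ Δ) :
    len Δ (reflection α * w * reflection α) = len Δ w + 2 := by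
  have hs := Submonoid.subset_closure (reflection_mem_simpleReflections hα)
  rw [mul_assoc, len_reflection_mul_of_pos hΦ hΔ hα (mul_mem hw hs),
    len_mul_reflection_of_pos hΦ hΔ hα hw h₁]
  rwa [mul_inv_rev, reflection_inv]

end Length

namespace IsBase

variable {Φ : Set V} {Δ : Finset V}

lemma exists_descent (hΦ : IsIrredRootSystem Φ) (hΔ : IsBase Φ Δ) {β : V}
    (hβ : β ∈ posRoots Φ Δ) (hβΔ : β ∉ Δ) (hlong : ∀ α ∈ Φ, ⟪α, α⟫ ≤ ⟪β, β⟫) :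
    ∃ α ∈ Δ, ∃ γ ∈ posRoots Φ Δ, ⟪γ, γ⟫ = ⟪β, β⟫ ∧ coroot β = coroot γ + coroot α ∧
      reflection β = reflection α * reflection γ * reflection α ∧
      reflection γ α ∈ posRoots Φ Δ ∧ reflection α (reflection γ α) ∈ posRoots Φ Δ := by
  obtain ⟨c, hc⟩ := hβ.2
  obtain ⟨α, hαΔ, hαβ⟩ := exists_mem_inner_pos hc (hΦ.ne_zero hβ.1)
  have hαΦ := hΔ.1 hαΔ
  have hne : α ≠ β := fun h => hβΔ (h ▸ hαΔ)
  have hone := hΦ.inner_coroot_eq_one_of_long hαΦ hβ.1 (hlong α hαΦ) hαβ hne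
  set γ := reflection α β with hγ
  have hγpos : γ ∈ posRoots Φ Δ := hΔ.reflection_mem_posRoots hΦ hαΔ hβ hne.symm
  have hsαγ : reflection α γ = β := by
    rw [hγ, ← LinearEquiv.mul_apply, reflection_mul_self, LinearEquiv.coe_one, id]
  have hsγα : reflection γ α = γ + (1 : ℝ) • α := by
    rw [reflection_reflection_apply, hone, one_smul, one_smul, add_comm]
  have hsαsγα : reflection α (reflection γ α) = γ + (2 * ⟪α, β⟫ / ⟪α, α⟫ - 1) • α := by
    rw [hsγα, map_add, hsαγ, map_smul, reflection_apply_self, hγ, reflection_apply]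
    module
  refine ⟨α, hαΔ, γ, hγpos, inner_reflection_reflection α β β, ?_, ?_, ?_, ?_⟩
  · rw [hγ, coroot_reflection, hone, one_smul, sub_add_cancel]
  · rw [← hsαγ, ← reflection_conj (inner_reflection_reflection α), reflection_inv]
  · rw [hsγα]
    exact hΔ.add_smul_mem_posRoots hΦ hγpos hαΔ zero_le_one
      (hsγα ▸ hΦ.reflection_mem hγpos.1 hαΦ)
  · rw [hsαsγα]
    exact hΔ.add_smul_mem_posRoots hΦ hγpos hαΔ
      (sub_nonneg.2 (hΦ.one_le_of_inner_pos hαΦ hβ.1 hαβ))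
      (hsαsγα ▸ hΦ.reflection_mem hαΦ (hΦ.reflection_mem hγpos.1 hαΦ))

theorem reflection_mem_closure_and_len_of_long (hΦ : IsIrredRootSystem Φ) (hΔ : IsBase Φ Δ)
    {f : V →ₗ[ℝ] ℝ} (hf : ∀ a ∈ Δ, f (coroot a) = 1) {β : V} (hβ : β ∈ posRoots Φ Δ)
    (hlong : ∀ α ∈ Φ, ⟪α, α⟫ ≤ ⟪β, β⟫) :
    reflection β ∈ Submonoid.closure (simpleReflections Δ) ∧
      (len Δ (reflection β) : ℝ) = 2 * f (coroot β) - 1 := by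
  have hwf : Φ.WellFoundedOn (Function.onFun (· < ·) fun δ => f (coroot δ)) :=
    Set.wellFoundedOn_image.1 (hΦ.finite.image _).wellFoundedOn
  refine hwf.induction (P := fun β => β ∈ posRoots Φ Δ → (∀ α ∈ Φ, ⟪α, α⟫ ≤ ⟪β, β⟫) →
    reflection β ∈ Submonoid.closure (simpleReflections Δ) ∧
      (len Δ (reflection β) : ℝ) = 2 * f (coroot β) - 1) hβ.1 ?_ hβ hlong
  intro β _ ih hβ hlong
  by_cases hβΔ : β ∈ Δ
  · refine ⟨Submonoid.subset_closure (reflection_mem_simpleReflections hβΔ), ?_⟩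
    rw [len_reflection hΦ hΔ hβΔ, hf β hβΔ]
    norm_num
  obtain ⟨α, hαΔ, γ, hγ, hγγ, hcoroot, hconj, h₁, h₂⟩ := hΔ.exists_descent hΦ hβ hβΔ hlong
  have hfγ : f (coroot γ) = f (coroot β) - 1 := by
    rw [hcoroot, map_add, hf α hαΔ]
    ring
  obtain ⟨hγW, hγlen⟩ := ih γ hγ.1 (by simp only [Function.onFun]; linarith) hγ (hγγ ▸ hlong)
  have hαW := Submonoid.subset_closure (reflection_mem_simpleReflections hαΔ)
  refine ⟨hconj ▸ mul_mem (mul_mem hαW hγW) hαW, ?_⟩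
  rw [hconj, len_reflection_mul_mul_reflection hΦ hΔ hαΔ hγW h₁ (by rwa [reflection_inv]),
    Nat.cast_add, hγlen, hfγ]
  push_cast
  ring

end IsBase

/-- For a positive long root `β`, the reflection `s_β` has length
`l(s_β) = 2·ht^∨(β) − 1`, where `ht^∨ = f ∘ coroot` is the height of the coroot (`f`
being the linear functional taking the value `1` on each simple coroot). -/
theorem length_reflection_long (Φ : Set V) (hΦ : IsIrredRootSystem Φ)
    (Δ : Finset V) (hΔ : IsBase Φ Δ)
    (r : ℝ) (hr : IsGreatest {x : ℝ | ∃ α ∈ Φ, x = ⟪α, α⟫} r)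
    (f : V →ₗ[ℝ] ℝ) (hf : ∀ a ∈ Δ, f (coroot a) = 1)
    (β : V) (hβ : β ∈ posRoots Φ Δ) (hβlg : ⟪β, β⟫ = r)
    (s : V ≃ₗ[ℝ] V) (hs : ∀ v, s v = v - (2 * ⟪β, v⟫ / ⟪β, β⟫) • β) :
    (len Δ s : ℝ) = 2 * f (coroot β) - 1 := by
  have hlong : ∀ α ∈ Φ, ⟪α, α⟫ ≤ ⟪β, β⟫ := fun α hα => hβlg ▸ hr.2 ⟨α, hα, rfl⟩
  obtain rfl : s = reflection β := LinearEquiv.ext hs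
  exact (hΔ.reflection_mem_closure_and_len_of_long hΦ hf hβ hlong).2
end
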